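/- (Theorem 3, safety of retarded functional differential equations via safety functionals) Let E be a real Banach space, τ > 0, and 𝓕 : C([-τ,0], E) → E. Let x : ℝ → E be continuously differentiable and satisfy ẋ(t) = 𝓕(x_t) for all t ≥ 0, where x_t(θ) = x(t+θ). Let 𝓗 : C([-τ,0], E) → ℝ be Fréchet differentiable and let α : ℝ → ℝ be continuous, strictly increasing with α(0) = 0. Suppose that for all t ≥ 0, D𝓗(x_t)(ẋ_t) ≥ -α(𝓗(x_t)), where ẋ_t(θ) = x'(t+θ). If 𝓗(x_0) ≥ 0, then 𝓗(x_t) ≥ 0 for all t ≥ 0; that is, the solution remains in the safe set 𝓢 = {φ ∈ C([-τ,0], E) : 𝓗(φ) ≥ 0}. -/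

import Mathlib

/-!
Along the solution, `h t = 𝓗(x_t)` is differentiable with `h' = D𝓗(x_t)(ẋ_t)`, since
`t ↦ x_t` is differentiable in the sup norm with derivative `ẋ_t` (mean value inequality plus
sup-norm continuity of `t ↦ ẋ_t`). Wherever `h < 0` the safety condition gives
`h' ≥ -α(h) > 0`, so `h` can never cross from `[0, ∞)` into the negatives.
-/

/-- History segment `x_t ∈ C([-τ,0], E)` of a continuous curve `x : ℝ → E`,
defined by `x_t θ = x (t + θ)`. -/
noncomputable def histSegment {E : Type*} [NormedAddCommGroup E]
    (τ : ℝ) (x : ℝ → E) (hx : Continuous x) (t : ℝ) :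
    C(Set.Icc (-τ) (0 : ℝ), E) :=
  ⟨fun θ => x (t + θ), hx.comp (continuous_const.add continuous_subtype_val)⟩

open Set

theorem continuous_histSegment {E : Type*} [NormedAddCommGroup E] (τ : ℝ) (x : ℝ → E)
    (hx : Continuous x) : Continuous (histSegment τ x hx) :=
  -- on `C(K, E)` with `K` compact the sup-norm topology is the compact-open one
  (ContinuousMap.curry ⟨fun p : ℝ × Icc (-τ) (0 : ℝ) => x (p.1 + p.2), by fun_prop⟩).continuous

theorem hasDerivAt_histSegment {E : Type*} [NormedAddCommGroup E] [NormedSpace ℝ E]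
    (τ : ℝ) {x x' : ℝ → E} (hx : Continuous x) (hx' : Continuous x')
    (hd : ∀ t, HasDerivAt x (x' t) t) (t : ℝ) :
    HasDerivAt (histSegment τ x hx) (histSegment τ x' hx' t) t := by
  rw [hasDerivAt_iff_isLittleO, Asymptotics.isLittleO_iff]
  intro ε hε
  obtain ⟨δ, hδ, hclose⟩ := Metric.continuous_iff.mp (continuous_histSegment τ x' hx') t ε hε
  filter_upwards [Metric.ball_mem_nhds t hδ] with s hs
  refine (ContinuousMap.norm_le _ (by positivity)).mpr fun θ => ?_
  set c := x' (t + θ)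
  have hderiv : ∀ v ∈ uIcc t s,
      HasDerivWithinAt (fun v => x (v + θ) - v • c) (x' (v + θ) - c) (uIcc t s) v :=
    fun v _ => (((hd (v + θ)).comp_add_const v θ).sub
      ((hasDerivAt_id v).smul_const c)).hasDerivWithinAt.congr_deriv (by simp)
  have hbound : ∀ v ∈ uIcc t s, ‖x' (v + θ) - c‖ ≤ ε := fun v hv => by
    have hv : dist v t < δ := (abs_sub_left_of_mem_uIcc hv).trans_lt hs
    have := (ContinuousMap.dist_apply_le_dist θ).trans (hclose v hv).le
    rwa [dist_eq_norm] at this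
  have := (convex_uIcc t s).norm_image_sub_le_of_norm_hasDerivWithin_le hderiv hbound
    left_mem_uIcc right_mem_uIcc
  refine le_of_eq_of_le (congrArg norm ?_) this
  simp only [ContinuousMap.sub_apply, ContinuousMap.smul_apply, histSegment, ContinuousMap.coe_mk,
    sub_smul, c]
  abel

theorem nonneg_of_hasDerivAt_pos_of_neg {h h' : ℝ → ℝ} {a : ℝ} (hcont : ContinuousOn h (Ici a))
    (hd : ∀ t > a, HasDerivAt h (h' t) t) (hpos : ∀ t > a, h t < 0 → 0 < h' t) (ha : 0 ≤ h a) :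
    ∀ t ≥ a, 0 ≤ h t := by
  intro b hab
  by_contra! hb
  have hclosed : IsClosed (Icc a b ∩ h ⁻¹' Ici 0) :=
    (hcont.mono Icc_subset_Ici_self).preimage_isClosed_of_isClosed isClosed_Icc isClosed_Ici
  -- `c` is the last time in `[a, b]` with `h ≥ 0`; on `(c, b)` `h < 0`, so `h` increases there.
  obtain ⟨c, ⟨⟨hac, hcb⟩, hc⟩, hmax⟩ :=
    (isCompact_Icc.of_isClosed_subset hclosed inter_subset_left).exists_isGreatest
      ⟨a, ⟨left_mem_Icc.mpr hab, ha⟩⟩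
  have hcb : c < b := hcb.lt_of_ne fun hcb => (hcb ▸ hb).not_ge hc
  have hneg : ∀ s ∈ Ioo c b, h s < 0 := fun s hs => by
    by_contra! hs0
    exact hs.1.not_ge (hmax ⟨⟨hac.trans hs.1.le, hs.2.le⟩, hs0⟩)
  have hmono : StrictMonoOn h (Icc c b) := by
    refine strictMonoOn_of_hasDerivWithinAt_pos (f' := h') (convex_Icc c b)
      (hcont.mono fun s hs => hac.trans hs.1) (fun s hs => ?_) fun s hs => ?_
    all_goals rw [interior_Icc] at hs
    · exact (hd s (hac.trans_lt hs.1)).hasDerivWithinAt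
    · exact hpos s (hac.trans_lt hs.1) (hneg s hs)
  linarith [hmono (left_mem_Icc.mpr hcb.le) (right_mem_Icc.mpr hcb.le) hcb, show 0 ≤ h c from hc]

theorem statement8_general (E : Type*) [NormedAddCommGroup E] [NormedSpace ℝ E]
    (τ : ℝ)
    (x x' : ℝ → E) (hx : Continuous x) (hx' : Continuous x')
    (hd : ∀ t : ℝ, HasDerivAt x (x' t) t)
    (H : C(Set.Icc (-τ) (0 : ℝ), E) → ℝ)
    (DH : C(Set.Icc (-τ) (0 : ℝ), E) → (C(Set.Icc (-τ) (0 : ℝ), E) →L[ℝ] ℝ))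
    (hH : ∀ φ : C(Set.Icc (-τ) (0 : ℝ), E), HasFDerivAt H (DH φ) φ)
    (α : ℝ → ℝ) (hα_mono : StrictMono α) (hα0 : α 0 = 0)
    (hsafe : ∀ t ≥ (0 : ℝ),
      DH (histSegment τ x hx t) (histSegment τ x' hx' t) ≥ -α (H (histSegment τ x hx t)))
    (h0 : H (histSegment τ x hx 0) ≥ 0) :
    ∀ t ≥ (0 : ℝ), H (histSegment τ x hx t) ≥ 0 := by
  have hderiv : ∀ t, HasDerivAt (fun t => H (histSegment τ x hx t))
      (DH (histSegment τ x hx t) (histSegment τ x' hx' t)) t :=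
    fun t => (hH _).comp_hasDerivAt t (hasDerivAt_histSegment τ hx hx' hd t)
  refine nonneg_of_hasDerivAt_pos_of_neg (fun t _ => (hderiv t).continuousAt.continuousWithinAt)
    (fun t _ => hderiv t) (fun t ht hneg => ?_) h0
  have : α (H (histSegment τ x hx t)) < 0 := hα0 ▸ hα_mono hneg
  linarith [hsafe t ht.le]

/-- Theorem 3: safety of retarded functional differential equations via safety
functionals. If `x` solves `ẋ(t) = 𝓕(x_t)` for `t ≥ 0`, `𝓗` is Fréchet
differentiable, `α` is continuous, strictly increasing with `α 0 = 0`, and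
`D𝓗(x_t)(ẋ_t) ≥ -α(𝓗(x_t))` for all `t ≥ 0`, then `𝓗(x_0) ≥ 0` implies
`𝓗(x_t) ≥ 0` for all `t ≥ 0`. -/
theorem statement8 (E : Type*) [NormedAddCommGroup E] [NormedSpace ℝ E] [CompleteSpace E]
    (τ : ℝ) (hτ : 0 < τ)
    (F : C(Set.Icc (-τ) (0 : ℝ), E) → E)
    (x x' : ℝ → E) (hx : Continuous x) (hx' : Continuous x')
    (hd : ∀ t : ℝ, HasDerivAt x (x' t) t)
    (hode : ∀ t ≥ (0 : ℝ), x' t = F (histSegment τ x hx t))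
    (H : C(Set.Icc (-τ) (0 : ℝ), E) → ℝ)
    (DH : C(Set.Icc (-τ) (0 : ℝ), E) → (C(Set.Icc (-τ) (0 : ℝ), E) →L[ℝ] ℝ))
    (hH : ∀ φ : C(Set.Icc (-τ) (0 : ℝ), E), HasFDerivAt H (DH φ) φ)
    (α : ℝ → ℝ) (hα_cont : Continuous α) (hα_mono : StrictMono α) (hα0 : α 0 = 0)
    (hsafe : ∀ t ≥ (0 : ℝ),
      DH (histSegment τ x hx t) (histSegment τ x' hx' t) ≥ -α (H (histSegment τ x hx t)))
    (h0 : H (histSegment τ x hx 0) ≥ 0) :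
    ∀ t ≥ (0 : ℝ), H (histSegment τ x hx t) ≥ 0 :=
  statement8_general E τ x x' hx hx' hd H DH hH α hα_mono hα0 hsafe h0
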